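/- arXiv:2605.23461 — 2 statements merged into one kernel-verified Lean document; each statement's English description precedes it below -/
import Mathlib

section
/- Suppose that assumptions (A1) and (A2) hold. Then for Lebesgue-almost every x ∈ [0,1), A_{m(h)}^{−1/2+δ/8} · Σ_{k=k_0(x,h)+1}^{m(h)} |a_k| → 0 as h ↓ 0. -/
open MeasureTheory Filter Real Set Topology Asymptotics

noncomputable section

/-- distance from `x` to its nearest integer -/
def distInt (x : ℝ) : ℝ := |x - round x|

/-- the Takagi--van der Waerden class function `f_{r,a}` -/
def tvdW (r : ℕ) (a : ℕ → ℝ) (x : ℝ) : ℝ :=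
  ∑' k : ℕ, a (k + 1) / (r : ℝ) ^ k * distInt ((r : ℝ) ^ k * x)

/-- `ψ_k(x) = r^{-(k-1)} d(r^{k-1} x)` -/
def psi (r k : ℕ) (x : ℝ) : ℝ := distInt ((r : ℝ) ^ (k - 1) * x) / (r : ℝ) ^ (k - 1)

/-- right-hand derivative of `ψ_k` -/
def psiPlus (r k : ℕ) (x : ℝ) : ℝ := derivWithin (psi r k) (Set.Ici x) x

/-- `w_n(x) = Σ_{k=1}^n a_k ψ_k⁺(x)` -/
def wSum (r : ℕ) (a : ℕ → ℝ) (n : ℕ) (x : ℝ) : ℝ :=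
  ∑ k ∈ Finset.Icc 1 n, a k * psiPlus r k x

/-- `V_n = ∫_0^1 w_n(x)² dx` -/
def Vvar (r : ℕ) (a : ℕ → ℝ) (n : ℕ) : ℝ := ∫ x in (0:ℝ)..1, (wSum r a n x) ^ 2

/-- `A_n = Σ_{k=1}^n a_k²` -/
def Asum (a : ℕ → ℝ) (n : ℕ) : ℝ := ∑ k ∈ Finset.Icc 1 n, (a k) ^ 2

/-- `m(h) = ⌊log_r (1/|h|)⌋` -/
def mIdx (r : ℕ) (h : ℝ) : ℕ := (⌊Real.logb r (1 / |h|)⌋).toNat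

/-- a standard Brownian motion on a probability space -/
structure IsStdBM {Ω : Type*} [MeasurableSpace Ω] (P : Measure Ω) (B : ℝ → Ω → ℝ) : Prop where
  meas : ∀ t, Measurable (B t)
  zero : ∀ᵐ ω ∂P, B 0 ω = 0
  cont : ∀ᵐ ω ∂P, Continuous fun t => B t ω
  gauss : ∀ s t : ℝ, 0 ≤ s → s ≤ t →
    P.map (fun ω => B t ω - B s ω) = ProbabilityTheory.gaussianReal 0 ((t - s).toNNReal)
  indep : ∀ (n : ℕ) (ts : Fin (n + 1) → ℝ), Monotone ts → (∀ i, 0 ≤ ts i) →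
    ProbabilityTheory.iIndepFun
      (fun i : Fin n => fun ω => B (ts i.succ) ω - B (ts i.castSucc) ω) P

end

/-- `k_0(x,h)`: the largest `k ≥ 0` such that the `r`-ary digits `ε_0,…,ε_k` of `x` and of
`x+h` coincide (equivalently `⌊r^k x⌋ = ⌊r^k (x+h)⌋`), and `−1` if already `ε_0 ≠ ε_0'`. -/
noncomputable def kZero (r : ℕ) (x h : ℝ) : ℤ :=
  sSup {k : ℤ | k = -1 ∨ (0 ≤ k ∧ ⌊(r : ℝ) ^ k.toNat * x⌋ = ⌊(r : ℝ) ^ k.toNat * (x + h)⌋)}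
/-!
Fix `ε > 0` and let `L_m` be the largest `L < m` with `|a_{m-L+1}| + ⋯ + |a_m| ≤ ε A_m^β`,
`β = 1/2 - δ/8`. If `{r^{m-L_m} x} < 1 - r^{-L_m}`, the digits of `x` and `x + h` agree up to
position `m - L_m` for every `h ≤ r^{-m}`, so the sum in question is at most `ε A_m^β`. The
exceptional set has measure at most `r^{-L_m}`, so by Borel–Cantelli it suffices that
`∑ r^{-L_m} < ∞`. When `L_m < m - 1` the window of length `L_m + 1` is heavy, hence with `θ = 6/7`
the weighted sum `∑ θ^{m-k} |a_k|` is at least `θ^{L_m} ε A_m^β`; Cauchy–Schwarz and (A2) then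
give `r^{-L_m} ≤ θ^{4 L_m} ≲ ∑_k θ^{m-k} a_k² / A_k^{1+δ/2}`, the convolution of a geometric
sequence with `a_k² / A_k^{1+δ/2}`, which is summable by comparison with the telescoping sum of
`A_k^{-δ/2}`.
-/

section Digits

variable {r : ℕ}

lemma kZero_bddAbove (hr : 2 ≤ r) (x : ℝ) {h : ℝ} (hh : 0 < h) :
    BddAbove {k : ℤ | k = -1 ∨
      (0 ≤ k ∧ ⌊(r : ℝ) ^ k.toNat * x⌋ = ⌊(r : ℝ) ^ k.toNat * (x + h)⌋)} := by
  refine ⟨⌈1 / h⌉, ?_⟩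
  rintro k (rfl | ⟨hk, hfloor⟩)
  · have : (0 : ℤ) < ⌈1 / h⌉ := Int.ceil_pos.2 (by positivity)
    exact this.le.trans' (by norm_num)
  · have hlt : (r : ℝ) ^ k.toNat * h < 1 := by
      have h1 := Int.floor_le ((r : ℝ) ^ k.toNat * x)
      have h2 := Int.lt_floor_add_one ((r : ℝ) ^ k.toNat * (x + h))
      rw [← hfloor] at h2
      linarith [mul_add ((r : ℝ) ^ k.toNat) x h]
    have hk' : ((k.toNat : ℤ) : ℝ) < 1 / h := by
      rw [lt_div_iff₀ hh, Int.cast_natCast]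
      calc (k.toNat : ℝ) * h ≤ (r : ℝ) ^ k.toNat * h := by
            gcongr
            exact_mod_cast (Nat.lt_pow_self (by omega)).le
        _ < 1 := hlt
    have := Int.lt_ceil.2 hk'
    omega

lemma le_kZero (hr : 2 ≤ r) {x h : ℝ} (hh : 0 < h) {j : ℕ}
    (hj : Int.fract ((r : ℝ) ^ j * x) + (r : ℝ) ^ j * h < 1) : (j : ℤ) ≤ kZero r x h := by
  refine le_csSup (kZero_bddAbove hr x hh) (Or.inr ⟨j.cast_nonneg, ?_⟩)
  rw [Int.toNat_natCast, mul_add, eq_comm, Int.floor_eq_iff]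
  have hfract := Int.fract_add_floor ((r : ℝ) ^ j * x)
  have hrh : 0 < (r : ℝ) ^ j * h := by positivity
  constructor <;> linarith [Int.fract_nonneg ((r : ℝ) ^ j * x)]

lemma sum_Icc_kZero_le (hr : 2 ≤ r) {u : ℕ → ℝ} (hu : ∀ k, 0 ≤ u k) {x h : ℝ}
    (hh : 0 < h) {m L : ℕ} (hL : L ≤ m) (hhm : h ≤ ((r : ℝ) ^ m)⁻¹)
    (hx : Int.fract ((r : ℝ) ^ (m - L) * x) < 1 - ((r : ℝ) ^ L)⁻¹) :
    ∑ k ∈ Finset.Icc (kZero r x h + 1).toNat m, u k ≤ ∑ k ∈ Finset.Icc (m - L + 1) m, u k := by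
  have hrh : (r : ℝ) ^ (m - L) * h ≤ ((r : ℝ) ^ L)⁻¹ := by
    calc (r : ℝ) ^ (m - L) * h ≤ (r : ℝ) ^ (m - L) * ((r : ℝ) ^ m)⁻¹ := by gcongr
      _ = ((r : ℝ) ^ L)⁻¹ := by
          rw [← Nat.sub_add_cancel hL, pow_add, Nat.add_sub_cancel]
          have : (0 : ℝ) < (r : ℝ) ^ L := by positivity
          field_simp
  have hk := le_kZero hr hh (j := m - L) (by linarith)
  exact Finset.sum_le_sum_of_subset_of_nonneg (Finset.Icc_subset_Icc (by omega) le_rfl)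
    fun k _ _ => hu k

lemma le_mIdx (hr : 2 ≤ r) {M : ℕ} {h : ℝ} (hh : 0 < h) (hM : h < ((r : ℝ) ^ M)⁻¹) :
    M ≤ mIdx r h := by
  rw [mIdx, Int.floor_toNat, abs_of_pos hh]
  apply Nat.le_floor
  rw [Real.le_logb_iff_rpow_le (by exact_mod_cast hr) (by positivity), Real.rpow_natCast,
    one_div]
  exact ((lt_inv_comm₀ hh (by positivity)).1 hM).le

lemma le_inv_pow_mIdx (hr : 2 ≤ r) {h : ℝ} (hh : 0 < h) (h1 : h ≤ 1) :
    h ≤ ((r : ℝ) ^ mIdx r h)⁻¹ := by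
  have hr1 : (1 : ℝ) < r := by exact_mod_cast hr
  rw [mIdx, Int.floor_toNat, abs_of_pos hh, le_inv_comm₀ hh (by positivity),
    ← Real.rpow_natCast]
  calc (r : ℝ) ^ (⌊Real.logb r (1 / h)⌋₊ : ℝ) ≤ (r : ℝ) ^ Real.logb r (1 / h) :=
        Real.rpow_le_rpow_of_exponent_le hr1.le
          (Nat.floor_le (Real.logb_nonneg hr1 (one_le_one_div hh h1)))
    _ = h⁻¹ := by rw [Real.rpow_logb (by positivity) hr1.ne' (by positivity), one_div]

lemma tendsto_mIdx (hr : 2 ≤ r) : Tendsto (mIdx r) (𝓝[>] 0) atTop :=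
  tendsto_atTop.2 fun M => Filter.mem_of_superset
    (Ioo_mem_nhdsGT (by positivity : (0 : ℝ) < ((r : ℝ) ^ M)⁻¹)) fun _ hh => le_mIdx hr hh.1 hh.2

end Digits

lemma volume_one_sub_le_fract_inter_Ico_le {n : ℕ} (hn : n ≠ 0) (c : ℝ) :
    volume ({x : ℝ | 1 - c ≤ Int.fract (n * x)} ∩ Ico 0 1) ≤ ENNReal.ofReal c := by
  have hn' : (0 : ℝ) < n := by positivity
  have hcover : {x : ℝ | 1 - c ≤ Int.fract (n * x)} ∩ Ico 0 1 ⊆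
      ⋃ i ∈ Finset.range n, Icc ((i + 1 - c) / n) ((i + 1) / n) := by
    rintro x ⟨hfract : 1 - c ≤ _, hx0, hx1⟩
    have hy : 0 ≤ (n : ℝ) * x := by positivity
    have hfloor : (⌊(n : ℝ) * x⌋₊ : ℝ) = ⌊(n : ℝ) * x⌋ := natCast_floor_eq_intCast_floor hy
    have hlt := Nat.lt_floor_add_one ((n : ℝ) * x)
    have hle := Nat.floor_le hy
    have hfr := Int.fract_add_floor ((n : ℝ) * x)
    refine Set.mem_biUnion (x := ⌊(n : ℝ) * x⌋₊) (Finset.mem_range.2 ?_) ?_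
    · have : (⌊(n : ℝ) * x⌋₊ : ℝ) < n := hle.trans_lt (by nlinarith)
      exact_mod_cast this
    · rw [Set.mem_Icc, div_le_iff₀ hn', le_div_iff₀ hn']
      constructor <;> linarith
  calc volume ({x : ℝ | 1 - c ≤ Int.fract (n * x)} ∩ Ico 0 1)
      ≤ ∑ i ∈ Finset.range n, volume (Icc (((i : ℝ) + 1 - c) / n) ((i + 1) / n)) :=
        (measure_mono hcover).trans (measure_biUnion_finset_le _ _)
    _ = ENNReal.ofReal c := by
        have hlen : ∀ i : ℕ, ((i : ℝ) + 1) / n - (i + 1 - c) / n = c / n := fun i => by ring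
        simp only [Real.volume_Icc, hlen, Finset.sum_const, Finset.card_range, nsmul_eq_mul]
        rw [← ENNReal.ofReal_natCast, ← ENNReal.ofReal_mul hn'.le, mul_div_cancel₀ _ hn'.ne']

lemma sum_Icc_pow_sub_le {θ : ℝ} (hθ0 : 0 ≤ θ) (hθ1 : θ < 1) (m : ℕ) :
    ∑ k ∈ Finset.Icc 1 m, θ ^ (m - k) ≤ (1 - θ)⁻¹ := by
  calc ∑ k ∈ Finset.Icc 1 m, θ ^ (m - k) ≤ ∑ k ∈ Finset.range (m + 1), θ ^ (m + 1 - 1 - k) :=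
        Finset.sum_le_sum_of_subset_of_nonneg
          (fun k hk => Finset.mem_range.2 (by simp at hk; omega)) fun _ _ _ => by positivity
    _ ≤ (1 - θ)⁻¹ := by
        rw [Finset.sum_range_reflect (fun k => θ ^ k), ← tsum_geometric_of_lt_one hθ0 hθ1]
        exact (summable_geometric_of_lt_one hθ0 hθ1).sum_le_tsum _ fun k _ => by positivity

lemma sum_Icc_pow_sub_mul_le {θ : ℝ} (hθ0 : 0 ≤ θ) (hθ1 : θ < 1) {v : ℕ → ℝ} {M : ℝ}
    (hM : 0 ≤ M) {m : ℕ} (hv : ∀ k ∈ Finset.Icc 1 m, v k ≤ M) :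
    ∑ k ∈ Finset.Icc 1 m, θ ^ (m - k) * v k ≤ (1 - θ)⁻¹ * M := by
  calc ∑ k ∈ Finset.Icc 1 m, θ ^ (m - k) * v k ≤ ∑ k ∈ Finset.Icc 1 m, θ ^ (m - k) * M :=
        Finset.sum_le_sum fun k hk => mul_le_mul_of_nonneg_left (hv k hk) (pow_nonneg hθ0 _)
    _ ≤ (1 - θ)⁻¹ * M := by
        rw [← Finset.sum_mul]
        exact mul_le_mul_of_nonneg_right (sum_Icc_pow_sub_le hθ0 hθ1 m) hM

lemma sq_sum_Icc_pow_sub_mul_le {θ : ℝ} (hθ0 : 0 ≤ θ) (hθ1 : θ < 1) (u : ℕ → ℝ) (m : ℕ) :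
    (∑ k ∈ Finset.Icc 1 m, θ ^ (m - k) * u k) ^ 2 ≤
      (1 - θ)⁻¹ * ∑ k ∈ Finset.Icc 1 m, θ ^ (m - k) * u k ^ 2 := by
  refine (Finset.sum_sq_le_sum_mul_sum_of_sq_le_mul _ (f := fun k => θ ^ (m - k))
    (g := fun k => θ ^ (m - k) * u k ^ 2) (fun k _ => pow_nonneg hθ0 (m - k))
    (fun k _ => by positivity) fun k _ => le_of_eq (by ring)).trans ?_
  exact mul_le_mul_of_nonneg_right (sum_Icc_pow_sub_le hθ0 hθ1 m)
    (Finset.sum_nonneg fun k _ => by positivity)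

lemma summable_sum_range_mul_pow_sub {c : ℕ → ℝ} (hc : Summable c) {θ : ℝ} (hθ0 : 0 ≤ θ)
    (hθ1 : θ < 1) : Summable fun m => ∑ k ∈ Finset.range (m + 1), c k * θ ^ (m - k) := by
  refine (summable_norm_sum_mul_range_of_summable_norm hc.norm ?_).of_norm
  exact (summable_geometric_of_lt_one hθ0 hθ1).congr fun n =>
    (Real.norm_of_nonneg (pow_nonneg hθ0 n)).symm

lemma sub_div_rpow_one_add_le {η a b : ℝ} (hη : 0 < η) (ha : 0 < a) (hab : a ≤ b) :
    (b - a) / b ^ (1 + η) ≤ η⁻¹ * ((a ^ η)⁻¹ - (b ^ η)⁻¹) := by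
  have hb : 0 < b := ha.trans_le hab
  have haη : 0 < a ^ η := Real.rpow_pos_of_pos ha η
  have hbη : 0 < b ^ η := Real.rpow_pos_of_pos hb η
  -- `1 - a / b ≤ log (b / a)` and `1 + η log (b / a) ≤ (b / a) ^ η`
  have hkey : η * (b - a) * a ^ η ≤ b * (b ^ η - a ^ η) := by
    have hlog := Real.one_sub_inv_le_log_of_pos (div_pos hb ha)
    have hexp := Real.add_one_le_exp (Real.log (b / a) * η)
    rw [inv_div] at hlog
    rw [← Real.rpow_def_of_pos (div_pos hb ha), Real.div_rpow hb.le ha.le,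
      le_div_iff₀ haη] at hexp
    have hlog' : b - a ≤ b * Real.log (b / a) := by
      have := mul_le_mul_of_nonneg_left hlog hb.le
      rwa [mul_sub, mul_one, mul_div_cancel₀ _ hb.ne'] at this
    nlinarith [mul_le_mul_of_nonneg_left hlog' (mul_nonneg hη.le haη.le)]
  calc (b - a) / b ^ (1 + η) = η * (b - a) * a ^ η / (η * a ^ η * (b * b ^ η)) := by
        rw [Real.rpow_add hb, Real.rpow_one]
        field_simp
    _ ≤ b * (b ^ η - a ^ η) / (η * a ^ η * (b * b ^ η)) := by gcongr
    _ = η⁻¹ * ((a ^ η)⁻¹ - (b ^ η)⁻¹) := by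
        field_simp

lemma summable_sub_div_rpow_one_add {S : ℕ → ℝ} (hS : Monotone S) (hS0 : 0 < S 0) {η : ℝ}
    (hη : 0 < η) : Summable fun n => (S (n + 1) - S n) / S (n + 1) ^ (1 + η) := by
  have hpos : ∀ n, 0 < S n := fun n => hS0.trans_le (hS n.zero_le)
  refine summable_of_sum_range_le (c := η⁻¹ * (S 0 ^ η)⁻¹)
    (fun n => div_nonneg (sub_nonneg.2 (hS n.le_succ)) (by have := hpos (n + 1); positivity))
    fun n => ?_
  calc ∑ i ∈ Finset.range n, (S (i + 1) - S i) / S (i + 1) ^ (1 + η)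
      ≤ ∑ i ∈ Finset.range n, η⁻¹ * ((S i ^ η)⁻¹ - (S (i + 1) ^ η)⁻¹) :=
        Finset.sum_le_sum fun i _ => sub_div_rpow_one_add_le hη (hpos i) (hS i.le_succ)
    _ = η⁻¹ * ((S 0 ^ η)⁻¹ - (S n ^ η)⁻¹) := by
        rw [← Finset.mul_sum, Finset.sum_range_sub' fun i => (S i ^ η)⁻¹]
    _ ≤ η⁻¹ * (S 0 ^ η)⁻¹ := by
        have := Real.rpow_pos_of_pos (hpos n) η
        gcongr
        exact sub_le_self _ (by positivity)

lemma Asymptotics.IsBigO.exists_forall_le_mul_of_monotone {f g : ℕ → ℝ}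
    (hfg : f =O[atTop] g) (hg : Monotone g) (hg1 : ∀ᶠ n in atTop, 1 ≤ g n) :
    ∃ C, ∀ᶠ m in atTop, ∀ k ≤ m, ‖f k‖ ≤ C * g m := by
  obtain ⟨C₀, hC₀, hw⟩ := hfg.exists_nonneg
  obtain ⟨K, hK⟩ := eventually_atTop.1 (hw.bound.and hg1)
  set S := ∑ k ∈ Finset.range K, ‖f k‖
  have hS : 0 ≤ S := Finset.sum_nonneg fun _ _ => norm_nonneg _
  refine ⟨C₀ + S, eventually_atTop.2 ⟨K, fun m hm k hkm => ?_⟩⟩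
  have hgm : 1 ≤ g m := (hK m hm).2
  rcases lt_or_ge k K with hk | hk
  · calc ‖f k‖ ≤ S := Finset.single_le_sum (fun i _ => norm_nonneg (f i)) (Finset.mem_range.2 hk)
      _ ≤ (C₀ + S) * g m := by nlinarith
  · have hgk : 1 ≤ g k := (hK k hk).2
    calc ‖f k‖ ≤ C₀ * ‖g k‖ := (hK k hk).1
      _ = C₀ * g k := by rw [Real.norm_of_nonneg (by linarith)]
      _ ≤ (C₀ + S) * g m := by nlinarith [hg hkm]

lemma Asum_nonneg (a : ℕ → ℝ) (n : ℕ) : 0 ≤ Asum a n :=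
  Finset.sum_nonneg fun _ _ => sq_nonneg _

lemma Asum_mono (a : ℕ → ℝ) : Monotone (Asum a) := fun _ _ hij =>
  Finset.sum_le_sum_of_subset_of_nonneg (Finset.Icc_subset_Icc le_rfl hij)
    fun _ _ _ => sq_nonneg _

lemma Asum_succ (a : ℕ → ℝ) (n : ℕ) : Asum a (n + 1) = Asum a n + a (n + 1) ^ 2 :=
  Finset.sum_Icc_succ_top (by omega) _

lemma sq_le_Asum (a : ℕ → ℝ) {k : ℕ} (hk : 1 ≤ k) : a k ^ 2 ≤ Asum a k := by
  obtain ⟨n, rfl⟩ := Nat.exists_eq_add_of_le' hk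
  rw [Asum_succ]
  linarith [Asum_nonneg a n]

lemma sq_div_Asum_rpow_le {a : ℕ → ℝ} {p : ℝ} (hp : 0 ≤ p) {k m : ℕ} (hk : 1 ≤ k)
    (hkm : k ≤ m) : a k ^ 2 / Asum a m ^ p ≤ a k ^ 2 / Asum a k ^ p := by
  rcases (Asum_nonneg a k).eq_or_lt with h0 | hpos
  · have : a k ^ 2 = 0 := le_antisymm (h0 ▸ sq_le_Asum a hk) (sq_nonneg _)
    simp [this]
  · exact div_le_div_of_nonneg_left (sq_nonneg _) (Real.rpow_pos_of_pos hpos p)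
      (Real.rpow_le_rpow hpos.le (Asum_mono a hkm) hp)

lemma summable_sq_div_Asum_rpow {a : ℕ → ℝ} (hA : Tendsto (Asum a) atTop atTop) {η : ℝ}
    (hη : 0 < η) : Summable fun k => a k ^ 2 / Asum a k ^ (1 + η) := by
  obtain ⟨K, hK⟩ := (hA.eventually_gt_atTop 0).exists
  rw [← summable_nat_add_iff (K + 1)]
  refine (summable_sub_div_rpow_one_add (S := fun n => Asum a (n + K))
    (fun i j hij => Asum_mono a (by omega)) (by simpa using hK) hη).congr fun n => ?_
  rw [add_right_comm n 1 K, ← add_assoc, Asum_succ _ (n + K), add_sub_cancel_left]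

lemma sum_Icc_pow_sub_mul_sq_div_rpow_le (a : ℕ → ℝ) {θ p : ℝ} (hθ : 0 ≤ θ) (hp : 0 ≤ p)
    (m : ℕ) :
    (∑ k ∈ Finset.Icc 1 m, θ ^ (m - k) * a k ^ 2) / Asum a m ^ p ≤
      ∑ k ∈ Finset.range (m + 1), a k ^ 2 / Asum a k ^ p * θ ^ (m - k) := by
  have hterm : ∀ k, 0 ≤ a k ^ 2 / Asum a k ^ p * θ ^ (m - k) := fun k =>
    mul_nonneg (div_nonneg (sq_nonneg _) (Real.rpow_nonneg (Asum_nonneg a k) _)) (by positivity)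
  rw [Finset.sum_div]
  calc ∑ k ∈ Finset.Icc 1 m, θ ^ (m - k) * a k ^ 2 / Asum a m ^ p
      ≤ ∑ k ∈ Finset.Icc 1 m, a k ^ 2 / Asum a k ^ p * θ ^ (m - k) :=
        Finset.sum_le_sum fun k hk => by
          rw [Finset.mem_Icc] at hk
          rw [mul_div_assoc, mul_comm]
          exact mul_le_mul_of_nonneg_right (sq_div_Asum_rpow_le hp hk.1 hk.2) (by positivity)
    _ ≤ ∑ k ∈ Finset.range (m + 1), a k ^ 2 / Asum a k ^ p * θ ^ (m - k) :=
        Finset.sum_le_sum_of_subset_of_nonneg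
          (fun k hk => Finset.mem_range.2 (by simp at hk; omega)) fun k _ _ => hterm k

noncomputable def tailLength (u B : ℕ → ℝ) (m : ℕ) : ℕ :=
  Nat.findGreatest (fun L => ∑ k ∈ Finset.Icc (m - L + 1) m, u k ≤ B m) (m - 1)

section TailLength

variable (u B : ℕ → ℝ) (m : ℕ)

lemma tailLength_le : tailLength u B m ≤ m - 1 :=
  Nat.findGreatest_le _

lemma sum_Icc_tailLength_le (hB : 0 ≤ B m) :
    ∑ k ∈ Finset.Icc (m - tailLength u B m + 1) m, u k ≤ B m := by
  unfold tailLength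
  exact Nat.findGreatest_spec (P := fun L => ∑ k ∈ Finset.Icc (m - L + 1) m, u k ≤ B m)
    (Nat.zero_le _) (by simpa using hB)

variable {u B m}

lemma lt_sum_Icc_tailLength (h : tailLength u B m < m - 1) :
    B m < ∑ k ∈ Finset.Icc (m - tailLength u B m) m, u k := by
  unfold tailLength at h ⊢
  have := Nat.findGreatest_is_greatest (Nat.lt_add_one _) h
  rwa [not_le, Nat.sub_add_eq, Nat.sub_add_cancel (by omega)] at this

lemma pow_tailLength_mul_le (hu : ∀ k, 0 ≤ u k) {θ : ℝ} (hθ0 : 0 ≤ θ) (hθ1 : θ ≤ 1)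
    (h : tailLength u B m < m - 1) :
    θ ^ tailLength u B m * B m ≤ ∑ k ∈ Finset.Icc 1 m, θ ^ (m - k) * u k := by
  set L := tailLength u B m
  calc θ ^ L * B m ≤ ∑ k ∈ Finset.Icc (m - L) m, θ ^ L * u k := by
        rw [← Finset.mul_sum]
        exact mul_le_mul_of_nonneg_left (lt_sum_Icc_tailLength h).le (pow_nonneg hθ0 L)
    _ ≤ ∑ k ∈ Finset.Icc (m - L) m, θ ^ (m - k) * u k :=
        Finset.sum_le_sum fun k hk => mul_le_mul_of_nonneg_right
          (pow_le_pow_of_le_one hθ0 hθ1 (by simp at hk; omega)) (hu k)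
    _ ≤ ∑ k ∈ Finset.Icc 1 m, θ ^ (m - k) * u k :=
        Finset.sum_le_sum_of_subset_of_nonneg (Finset.Icc_subset_Icc (by omega) le_rfl)
          fun k _ _ => mul_nonneg (pow_nonneg hθ0 _) (hu k)

end TailLength

-- `θ = 6/7` is chosen so that `r⁻¹ ≤ 1/2 ≤ θ ^ 4` and `∑ θ ^ j ≤ 7`.
lemma inv_pow_le_of_pow_mul_le {r L : ℕ} (hr : 2 ≤ r) {B G H M : ℝ} (hB : 0 < B)
    (hG : (6 / 7 : ℝ) ^ L * B ≤ G) (hG2 : G ^ 2 ≤ 7 * H) (hH : H ≤ 7 * M) :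
    ((r : ℝ) ^ L)⁻¹ ≤ 7 ^ 3 * M * H / B ^ 4 := by
  have hH0 : 0 ≤ H := by nlinarith
  calc ((r : ℝ) ^ L)⁻¹ ≤ ((6 / 7 : ℝ) ^ L) ^ 4 := by
        rw [← inv_pow, ← pow_mul, mul_comm, pow_mul]
        gcongr
        calc (r : ℝ)⁻¹ ≤ 2⁻¹ := inv_anti₀ (by norm_num) (by exact_mod_cast hr)
          _ ≤ (6 / 7) ^ 4 := by norm_num
    _ ≤ (G / B) ^ 4 := by
        gcongr
        rwa [le_div_iff₀ hB]
    _ = (G ^ 2) ^ 2 / B ^ 4 := by ring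
    _ ≤ 7 ^ 3 * M * H / B ^ 4 := by
        gcongr
        nlinarith

theorem inv_pow_tailLength_le {r : ℕ} (hr : 2 ≤ r) {a : ℕ → ℝ} {δ ε C : ℝ} (hδ : 0 ≤ δ)
    (hε : 0 < ε) {m : ℕ} (hAm : 0 < Asum a m)
    (hC : ∀ k ≤ m, a k ^ 2 ≤ C * Asum a m ^ (1 - δ)) :
    ((r : ℝ) ^ tailLength (fun k => |a k|) (fun n => ε * Asum a n ^ (1 / 2 - δ / 8)) m)⁻¹ ≤
      ((r : ℝ) ^ (m - 1))⁻¹ + 7 ^ 3 * C / ε ^ 4 *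
        ∑ k ∈ Finset.range (m + 1), a k ^ 2 / Asum a k ^ (1 + δ / 2) * (6 / 7) ^ (m - k) := by
  set L := tailLength (fun k => |a k|) (fun n => ε * Asum a n ^ (1 / 2 - δ / 8)) m
  set A := Asum a m
  set F := ∑ k ∈ Finset.range (m + 1), a k ^ 2 / Asum a k ^ (1 + δ / 2) * (6 / 7 : ℝ) ^ (m - k)
  have hCA : 0 ≤ C * A ^ (1 - δ) := (sq_nonneg _).trans (hC m le_rfl)
  have hC0 : 0 ≤ C := (mul_nonneg_iff_of_pos_right (Real.rpow_pos_of_pos hAm _)).1 hCA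
  have hF : 0 ≤ F := Finset.sum_nonneg fun k _ =>
    mul_nonneg (div_nonneg (sq_nonneg _) (Real.rpow_nonneg (Asum_nonneg a k) _)) (by positivity)
  rcases (tailLength_le _ _ m : L ≤ m - 1).eq_or_lt with hL | hL
  · rw [show L = m - 1 from hL]
    exact le_add_of_nonneg_right (by positivity)
  have hG := pow_tailLength_mul_le (fun k => abs_nonneg (a k)) (θ := 6 / 7) (by norm_num)
    (by norm_num) hL
  have hG2 := sq_sum_Icc_pow_sub_mul_le (θ := 6 / 7) (by norm_num) (by norm_num) (|a ·|) m
  have hH := sum_Icc_pow_sub_mul_le (θ := 6 / 7) (by norm_num) (by norm_num) hCA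
    fun k hk => hC k (Finset.mem_Icc.1 hk).2
  norm_num only [sq_abs] at hG2 hH
  have hexp : (ε * A ^ (1 / 2 - δ / 8)) ^ 4 = ε ^ 4 * (A ^ (1 - δ) * A ^ (1 + δ / 2)) := by
    rw [mul_pow, ← Real.rpow_natCast (A ^ _), ← Real.rpow_mul hAm.le, ← Real.rpow_add hAm]
    ring_nf
  calc ((r : ℝ) ^ L)⁻¹
      ≤ 7 ^ 3 * (C * A ^ (1 - δ)) * (∑ k ∈ Finset.Icc 1 m, (6 / 7 : ℝ) ^ (m - k) * a k ^ 2) /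
          (ε * A ^ (1 / 2 - δ / 8)) ^ 4 :=
        inv_pow_le_of_pow_mul_le hr (by positivity) hG hG2 hH
    _ = 7 ^ 3 * C / ε ^ 4 *
          ((∑ k ∈ Finset.Icc 1 m, (6 / 7 : ℝ) ^ (m - k) * a k ^ 2) / A ^ (1 + δ / 2)) := by
        have := Real.rpow_pos_of_pos hAm (1 - δ)
        rw [hexp]
        field_simp
    _ ≤ 7 ^ 3 * C / ε ^ 4 * F := by
        gcongr
        exact sum_Icc_pow_sub_mul_sq_div_rpow_le a (by norm_num) (by linarith) m
    _ ≤ _ := le_add_of_nonneg_left (by positivity)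

theorem summable_inv_pow_tailLength {r : ℕ} (hr : 2 ≤ r) {a : ℕ → ℝ} {δ : ℝ}
    (hδ : δ ∈ Set.Ioc (0 : ℝ) 1) (hA1 : Tendsto (Asum a) atTop atTop)
    (hA2 : (fun n => (a n) ^ 2) =O[atTop] fun n => Asum a n ^ (1 - δ)) {ε : ℝ} (hε : 0 < ε) :
    Summable fun m =>
      ((r : ℝ) ^ tailLength (fun k => |a k|) (fun n => ε * Asum a n ^ (1 / 2 - δ / 8)) m)⁻¹ := by
  obtain ⟨C, hC⟩ := hA2.exists_forall_le_mul_of_monotone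
    (fun i j hij => Real.rpow_le_rpow (Asum_nonneg a i) (Asum_mono a hij) (by linarith [hδ.2]))
    ((hA1.eventually_ge_atTop 1).mono fun n hn => Real.one_le_rpow hn (by linarith [hδ.2]))
  have hgeom : Summable fun m => ((r : ℝ) ^ (m - 1))⁻¹ := by
    rw [← summable_nat_add_iff 1]
    simpa [← inv_pow] using summable_geometric_of_lt_one (by positivity)
      (inv_lt_one_of_one_lt₀ (by exact_mod_cast hr : (1 : ℝ) < r))
  have hconv := summable_sum_range_mul_pow_sub
    (summable_sq_div_Asum_rpow hA1 (η := δ / 2) (by linarith [hδ.1])) (θ := 6 / 7)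
    (by norm_num) (by norm_num)
  refine .of_norm_bounded_eventually_nat (hgeom.add (hconv.mul_left (7 ^ 3 * C / ε ^ 4))) ?_
  filter_upwards [hC, hA1.eventually_gt_atTop 0] with m hCm hAm
  rw [Real.norm_of_nonneg (by positivity)]
  exact inv_pow_tailLength_le hr hδ.1.le hε hAm fun k hk => by simpa using hCm k hk

theorem ae_eventually_sum_Icc_kZero_le {r : ℕ} (hr : 2 ≤ r) {a : ℕ → ℝ} {δ : ℝ}
    (hδ : δ ∈ Set.Ioc (0 : ℝ) 1) (hA1 : Tendsto (Asum a) atTop atTop)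
    (hA2 : (fun n => (a n) ^ 2) =O[atTop] fun n => Asum a n ^ (1 - δ)) {ε : ℝ} (hε : 0 < ε) :
    ∀ᵐ x ∂(volume.restrict (Ico (0 : ℝ) 1)), ∀ᶠ m in atTop, ∀ h : ℝ, 0 < h →
      h ≤ ((r : ℝ) ^ m)⁻¹ →
        ∑ k ∈ Finset.Icc (kZero r x h + 1).toNat m, |a k| ≤ ε * Asum a m ^ (1 / 2 - δ / 8) := by
  set L := tailLength (fun k => |a k|) (fun n => ε * Asum a n ^ (1 / 2 - δ / 8))
  have hsum : Summable fun m => ((r : ℝ) ^ L m)⁻¹ :=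
    summable_inv_pow_tailLength hr hδ hA1 hA2 hε
  set Bad : ℕ → Set ℝ := fun m => {x | 1 - ((r : ℝ) ^ L m)⁻¹ ≤ Int.fract ((r : ℝ) ^ (m - L m) * x)}
  have hBad : ∀ m, volume.restrict (Ico (0 : ℝ) 1) (Bad m) ≤ ENNReal.ofReal ((r : ℝ) ^ L m)⁻¹ :=
    fun m => by
      rw [Measure.restrict_apply' measurableSet_Ico]
      have := volume_one_sub_le_fract_inter_Ico_le (n := r ^ (m - L m)) (by positivity)
        ((r : ℝ) ^ L m)⁻¹
      rwa [Nat.cast_pow] at this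
  have hBC : ∑' m, volume.restrict (Ico (0 : ℝ) 1) (Bad m) ≠ ⊤ := by
    refine ne_top_of_le_ne_top ?_ (ENNReal.tsum_le_tsum hBad)
    rw [← ENNReal.ofReal_tsum_of_nonneg (fun _ => by positivity) hsum]
    exact ENNReal.ofReal_ne_top
  filter_upwards [ae_eventually_notMem hBC] with x hx
  filter_upwards [hx] with m hxm h hh hhm
  exact (sum_Icc_kZero_le hr (fun k => abs_nonneg (a k)) hh
    ((tailLength_le _ _ m).trans (Nat.sub_le m 1)) hhm (not_le.1 hxm)).trans
    (sum_Icc_tailLength_le _ _ m (mul_nonneg hε.le (Real.rpow_nonneg (Asum_nonneg a m) _)))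

theorem ae_eventually_rpow_mul_sum_Icc_kZero_le {r : ℕ} (hr : 2 ≤ r) {a : ℕ → ℝ} {δ : ℝ}
    (hδ : δ ∈ Set.Ioc (0 : ℝ) 1) (hA1 : Tendsto (Asum a) atTop atTop)
    (hA2 : (fun n => (a n) ^ 2) =O[atTop] fun n => Asum a n ^ (1 - δ)) {ε : ℝ} (hε : 0 < ε) :
    ∀ᵐ x ∂(volume.restrict (Ico (0 : ℝ) 1)), ∀ᶠ h in 𝓝[>] (0 : ℝ),
      Asum a (mIdx r h) ^ (-(1 : ℝ) / 2 + δ / 8) *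
        ∑ k ∈ Finset.Icc (kZero r x h + 1).toNat (mIdx r h), |a k| ≤ ε := by
  filter_upwards [ae_eventually_sum_Icc_kZero_le hr hδ hA1 hA2 hε] with x hx
  filter_upwards [(tendsto_mIdx hr).eventually (hx.and (hA1.eventually_gt_atTop 0)),
    Ioo_mem_nhdsGT one_pos] with h ⟨hsum, hA⟩ ⟨h0, h1⟩
  calc Asum a (mIdx r h) ^ (-(1 : ℝ) / 2 + δ / 8) *
        ∑ k ∈ Finset.Icc (kZero r x h + 1).toNat (mIdx r h), |a k|
      ≤ Asum a (mIdx r h) ^ (-(1 : ℝ) / 2 + δ / 8) *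
          (ε * Asum a (mIdx r h) ^ (1 / 2 - δ / 8)) := by
        gcongr
        exact hsum h h0 (le_inv_pow_mIdx hr h0 h1.le)
    _ = ε := by
        rw [mul_left_comm, ← Real.rpow_add hA]
        norm_num

/-- **Lemma 4.1.** Under (A1) and (A2), for Lebesgue-a.e. `x ∈ [0,1)`,
`A_{m(h)}^{−1/2+δ/8} · Σ_{k=k_0(x,h)+1}^{m(h)} |a_k| → 0` as `h ↓ 0`. -/
theorem stmt13 (r : ℕ) (hr : 2 ≤ r) (a : ℕ → ℝ) (δ : ℝ) (hδ : δ ∈ Set.Ioc (0:ℝ) 1)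
    (hA1 : Tendsto (Asum a) atTop atTop)
    (hA2 : (fun n => (a n) ^ 2) =O[atTop] fun n => Asum a n ^ (1 - δ)) :
    ∀ᵐ x ∂(volume.restrict (Set.Ico (0:ℝ) 1)),
      Tendsto
        (fun h : ℝ =>
          Asum a (mIdx r h) ^ (-(1:ℝ)/2 + δ/8) *
            ∑ k ∈ Finset.Icc (kZero r x h + 1).toNat (mIdx r h), |a k|)
        (𝓝[>] (0:ℝ)) (𝓝 0) := by
  have hq : ∀ q : ℕ, ∀ᵐ x ∂(volume.restrict (Ico (0 : ℝ) 1)), ∀ᶠ h in 𝓝[>] (0 : ℝ),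
      Asum a (mIdx r h) ^ (-(1 : ℝ) / 2 + δ / 8) *
        ∑ k ∈ Finset.Icc (kZero r x h + 1).toNat (mIdx r h), |a k| ≤ 1 / (q + 1) :=
    fun q => ae_eventually_rpow_mul_sum_Icc_kZero_le hr hδ hA1 hA2 (by positivity)
  filter_upwards [ae_all_iff.2 hq] with x hx
  refine tendsto_order.2 ⟨fun b hb => Eventually.of_forall fun h => hb.trans_le ?_,
    fun b hb => ?_⟩
  · exact mul_nonneg (Real.rpow_nonneg (Asum_nonneg a _) _)
      (Finset.sum_nonneg fun k _ => abs_nonneg (a k))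
  · obtain ⟨q, hqb⟩ := exists_nat_one_div_lt hb
    exact (hx q).mono fun h hh => hh.trans_lt hqb
end

section
/- Suppose that assumptions (A1) and (A2) hold. Then Σ_{k=m(h)+1}^∞ |a_k|/r^{k−1} = O(h · A_{m(h)}^{1/2−δ/2}) as h ↓ 0. -/
open MeasureTheory Filter Real Set Topology Asymptotics

/-!
By (A1) and (A2), `a_n² = O(A_n^{1-δ}) = o(A_n)`, so eventually `A_{n+1} ≤ 2 A_n` and hence
`A_{m+k} ≤ 2^k A_m`. Feeding this back into (A2) gives
`|a_{m+1+k}| ≤ K (√2)^{k+1} A_m^{(1-δ)/2}`, and since `√2 < r` the tail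
`Σ_k |a_{m+1+k}| / r^{m+k}` is dominated by a geometric series: it is `O(A_m^{(1-δ)/2} r^{-m})`.
Finally `r^{-m(h)} ≤ r h` because `log_r (1/h) < m(h) + 1`.
-/

lemma isLittleO_rpow_id_atTop {p : ℝ} (hp : p < 1) : (fun x : ℝ => x ^ p) =o[atTop] id := by
  refine (isLittleO_iff_tendsto' ?_).2 ?_
  · filter_upwards [eventually_gt_atTop 0] with x hx h0
    exact absurd h0 hx.ne'
  · refine (tendsto_rpow_neg_atTop (sub_pos.2 hp)).congr' ?_
    filter_upwards [eventually_gt_atTop 0] with x hx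
    rw [neg_sub, rpow_sub_one hx.ne', id]

lemma tsum_le_mul_inv_one_sub_of_le_geometric {f : ℕ → ℝ} {c q : ℝ} (hq₀ : 0 ≤ q) (hq₁ : q < 1)
    (hf₀ : ∀ k, 0 ≤ f k) (hf : ∀ k, f k ≤ c * q ^ k) : ∑' k, f k ≤ c * (1 - q)⁻¹ := by
  have hg := (summable_geometric_of_lt_one hq₀ hq₁).mul_left c
  calc ∑' k, f k ≤ ∑' k, c * q ^ k := (hg.of_nonneg_of_le hf₀ hf).tsum_le_tsum hf hg
    _ = c * (1 - q)⁻¹ := by rw [tsum_mul_left, tsum_geometric_of_lt_one hq₀ hq₁]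

namespace Asum

lemma nonneg (a : ℕ → ℝ) (n : ℕ) : 0 ≤ Asum a n :=
  Finset.sum_nonneg fun _ _ => sq_nonneg _

lemma succ (a : ℕ → ℝ) (n : ℕ) : Asum a (n + 1) = Asum a n + a (n + 1) ^ 2 :=
  Finset.sum_Icc_succ_top (by omega) _

variable {a : ℕ → ℝ}

lemma sq_isLittleO {δ : ℝ} (hδ : 0 < δ) (hA1 : Tendsto (Asum a) atTop atTop)
    (hA2 : (fun n => a n ^ 2) =O[atTop] fun n => Asum a n ^ (1 - δ)) :
    (fun n => a n ^ 2) =o[atTop] Asum a :=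
  hA2.trans_isLittleO ((isLittleO_rpow_id_atTop (by linarith)).comp_tendsto hA1)

lemma eventually_succ_le_two_mul (hA : (fun n => a n ^ 2) =o[atTop] Asum a) :
    ∀ᶠ n in atTop, Asum a (n + 1) ≤ 2 * Asum a n := by
  filter_upwards [(tendsto_add_atTop_nat 1).eventually (hA.def (c := 1 / 2) (by norm_num))]
    with n hn
  rw [norm_of_nonneg (sq_nonneg _), norm_of_nonneg (nonneg a _)] at hn
  linarith [succ a n]

lemma eventually_add_le_two_pow_mul (hA : (fun n => a n ^ 2) =o[atTop] Asum a) :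
    ∀ᶠ m in atTop, ∀ k, Asum a (m + k) ≤ 2 ^ k * Asum a m := by
  obtain ⟨N, hN⟩ := eventually_atTop.1 (eventually_succ_le_two_mul hA)
  filter_upwards [eventually_ge_atTop N] with m hm k
  exact le_geom (u := fun k => Asum a (m + k)) zero_le_two k fun j _ => hN (m + j) (by omega)

lemma eventually_abs_le_sqrt_two_pow_mul {δ : ℝ} (hδ : δ ∈ Ioc 0 1)
    (hA1 : Tendsto (Asum a) atTop atTop)
    (hA2 : (fun n => a n ^ 2) =O[atTop] fun n => Asum a n ^ (1 - δ)) :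
    ∃ K, ∀ᶠ m in atTop, ∀ k,
      |a (m + 1 + k)| ≤ K * √2 ^ (k + 1) * Asum a m ^ ((1:ℝ)/2 - δ/2) := by
  obtain ⟨C, hC, hCbound⟩ := hA2.exists_pos
  obtain ⟨N, hN⟩ := eventually_atTop.1 hCbound.bound
  refine ⟨√C, ?_⟩
  filter_upwards [eventually_add_le_two_pow_mul (sq_isLittleO hδ.1 hA1 hA2),
    eventually_ge_atTop N] with m hgrow hm k
  have hsq : a (m + 1 + k) ^ 2 ≤ C * (2 ^ (k + 1) * Asum a m ^ (1 - δ)) := by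
    have h := hN (m + 1 + k) (by omega)
    rw [norm_of_nonneg (sq_nonneg _), norm_of_nonneg (rpow_nonneg (nonneg a _) _)] at h
    have hgrow' : Asum a (m + 1 + k) ≤ 2 ^ (k + 1) * Asum a m := by
      simpa only [add_assoc, add_comm 1 k] using hgrow (k + 1)
    calc a (m + 1 + k) ^ 2 ≤ C * Asum a (m + 1 + k) ^ (1 - δ) := h
      _ ≤ C * (2 ^ (k + 1) * Asum a m) ^ (1 - δ) := by
        gcongr
        · exact nonneg a _
        · linarith [hδ.2]
      _ = C * (((2:ℝ) ^ (k + 1)) ^ (1 - δ) * Asum a m ^ (1 - δ)) := by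
        rw [mul_rpow (by positivity) (nonneg a _)]
      _ ≤ C * (2 ^ (k + 1) * Asum a m ^ (1 - δ)) := by
        refine mul_le_mul_of_nonneg_left
          (mul_le_mul_of_nonneg_right ?_ (rpow_nonneg (nonneg a _) _)) hC.le
        exact rpow_le_self_of_one_le (one_le_pow₀ one_le_two) (by linarith [hδ.1])
  calc |a (m + 1 + k)| = √(a (m + 1 + k) ^ 2) := (sqrt_sq_eq_abs _).symm
    _ ≤ √(C * (2 ^ (k + 1) * Asum a m ^ (1 - δ))) := sqrt_le_sqrt hsq
    _ = √C * √2 ^ (k + 1) * Asum a m ^ ((1:ℝ)/2 - δ/2) := by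
      have hpow : √((2:ℝ) ^ (k + 1)) = √2 ^ (k + 1) := by
        rw [sqrt_eq_iff_eq_sq (by positivity) (by positivity), ← pow_mul, mul_comm, pow_mul,
          sq_sqrt zero_le_two]
      rw [sqrt_mul hC.le, sqrt_mul (by positivity), hpow,
        sqrt_eq_rpow (Asum a m ^ _), ← rpow_mul (nonneg a _), mul_assoc]
      ring_nf

end Asum

lemma tsum_tail_isBigO {a : ℕ → ℝ} {r : ℕ} (hr : 2 ≤ r) {δ : ℝ} (hδ : δ ∈ Ioc 0 1)
    (hA1 : Tendsto (Asum a) atTop atTop)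
    (hA2 : (fun n => a n ^ 2) =O[atTop] fun n => Asum a n ^ (1 - δ)) :
    (fun m : ℕ => ∑' k : ℕ, |a (m + 1 + k)| / (r : ℝ) ^ (m + k))
      =O[atTop] fun m => Asum a m ^ ((1:ℝ)/2 - δ/2) / (r : ℝ) ^ m := by
  obtain ⟨K, hK⟩ := Asum.eventually_abs_le_sqrt_two_pow_mul hδ hA1 hA2
  have hr₂ : (2:ℝ) ≤ r := by exact_mod_cast hr
  set q : ℝ := √2 / r
  have hq₀ : 0 ≤ q := by positivity
  have hq₁ : q < 1 := by
    rw [div_lt_one (by linarith)]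
    linarith [(sqrt_lt' two_pos).2 (by norm_num : (2:ℝ) < 2 ^ 2)]
  refine IsBigO.of_bound (K * √2 * (1 - q)⁻¹) ?_
  filter_upwards [hK] with m hm
  have hE : 0 ≤ Asum a m ^ ((1:ℝ)/2 - δ/2) / (r : ℝ) ^ m :=
    div_nonneg (rpow_nonneg (Asum.nonneg a m) _) (by positivity)
  rw [norm_of_nonneg (tsum_nonneg fun k => by positivity), norm_of_nonneg hE]
  calc ∑' k : ℕ, |a (m + 1 + k)| / (r : ℝ) ^ (m + k)
      ≤ K * √2 * (Asum a m ^ ((1:ℝ)/2 - δ/2) / (r : ℝ) ^ m) * (1 - q)⁻¹ := by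
        refine tsum_le_mul_inv_one_sub_of_le_geometric hq₀ hq₁ (fun k => by positivity) fun k => ?_
        calc |a (m + 1 + k)| / (r : ℝ) ^ (m + k)
            ≤ K * √2 ^ (k + 1) * Asum a m ^ ((1:ℝ)/2 - δ/2) / (r : ℝ) ^ (m + k) := by
              gcongr
              exact hm k
          _ = K * √2 * (Asum a m ^ ((1:ℝ)/2 - δ/2) / (r : ℝ) ^ m) * q ^ k := by
              simp only [q, div_pow, pow_add, pow_one]
              field_simp
    _ = K * √2 * (1 - q)⁻¹ * (Asum a m ^ ((1:ℝ)/2 - δ/2) / (r : ℝ) ^ m) := by ring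

lemma mIdx_eq_natFloor (r : ℕ) (h : ℝ) : mIdx r h = ⌊logb r (1 / |h|)⌋₊ :=
  Int.floor_toNat _

lemma tendsto_mIdx_nhdsGT_zero {r : ℕ} (hr : 1 < r) : Tendsto (mIdx r) (𝓝[>] 0) atTop := by
  have hinv : Tendsto (fun h : ℝ => 1 / |h|) (𝓝[>] 0) atTop := by
    refine tendsto_inv_nhdsGT_zero.congr' ?_
    filter_upwards [self_mem_nhdsWithin] with h (hh : 0 < h)
    rw [abs_of_pos hh, one_div]
  rw [funext (mIdx_eq_natFloor r)]
  exact tendsto_nat_floor_atTop.comp ((tendsto_logb_atTop (by exact_mod_cast hr)).comp hinv)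

lemma inv_pow_mIdx_le {r : ℕ} (hr : 1 < r) {h : ℝ} (hh : 0 < h) :
    ((r : ℝ) ^ mIdx r h)⁻¹ ≤ r * h := by
  have hr₁ : (1:ℝ) < r := by exact_mod_cast hr
  have hlog : logb r (1 / h) < (mIdx r h : ℝ) + 1 := by
    simpa only [mIdx_eq_natFloor, abs_of_pos hh] using Nat.lt_floor_add_one (logb r (1 / h))
  rw [logb_lt_iff_lt_rpow hr₁ (by positivity), ← Nat.cast_add_one, rpow_natCast, pow_succ,
    div_lt_iff₀ hh] at hlog
  rw [inv_le_iff_one_le_mul₀ (by positivity)]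
  nlinarith

lemma inv_pow_mIdx_isBigO {r : ℕ} (hr : 1 < r) :
    (fun h : ℝ => ((r : ℝ) ^ mIdx r h)⁻¹) =O[𝓝[>] 0] fun h => h := by
  refine IsBigO.of_bound r ?_
  filter_upwards [self_mem_nhdsWithin] with h (hh : 0 < h)
  rw [norm_of_nonneg (by positivity), norm_of_nonneg hh.le]
  exact inv_pow_mIdx_le hr hh

/-- **Lemma 4.2.** Under (A1) and (A2),
`Σ_{k=m(h)+1}^∞ |a_k|/r^{k−1} = O(h · A_{m(h)}^{1/2−δ/2})` as `h ↓ 0`. -/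
theorem stmt14 (r : ℕ) (hr : 2 ≤ r) (a : ℕ → ℝ) (δ : ℝ) (hδ : δ ∈ Set.Ioc (0:ℝ) 1)
    (hA1 : Tendsto (Asum a) atTop atTop)
    (hA2 : (fun n => (a n) ^ 2) =O[atTop] fun n => Asum a n ^ (1 - δ)) :
    (fun h : ℝ => ∑' k : ℕ, |a (mIdx r h + 1 + k)| / (r : ℝ) ^ (mIdx r h + k))
      =O[𝓝[>] (0:ℝ)] fun h : ℝ => h * Asum a (mIdx r h) ^ ((1:ℝ)/2 - δ/2) := by
  have hr₁ : 1 < r := by omega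
  calc (fun h : ℝ => ∑' k : ℕ, |a (mIdx r h + 1 + k)| / (r : ℝ) ^ (mIdx r h + k))
      =O[𝓝[>] 0] fun h => Asum a (mIdx r h) ^ ((1:ℝ)/2 - δ/2) / (r : ℝ) ^ mIdx r h :=
        (tsum_tail_isBigO hr hδ hA1 hA2).comp_tendsto (tendsto_mIdx_nhdsGT_zero hr₁)
    _ =O[𝓝[>] 0] fun h => Asum a (mIdx r h) ^ ((1:ℝ)/2 - δ/2) * h := by
        simp only [div_eq_mul_inv]
        exact (isBigO_refl _ _).mul (inv_pow_mIdx_isBigO hr₁)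
    _ = fun h => h * Asum a (mIdx r h) ^ ((1:ℝ)/2 - δ/2) := by
        simp only [mul_comm]
end
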